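/- Assume J positive, strictly decreasing, 0 < h < ∑_{n=1}^{N-1} J(n), L = ⌊N/2⌋, and f(k) = H(L^(k)). If h = h_k^(N) for some k ∈ {1,...,L-1}, then f(k) = f(k+1) and f(k) > f(i) for all i ∉ {k, k+1}; if instead h < h_{L-1}^(N), then f(L) > f(i) for all i ≠ L. -/
import Mathlib


open Finset

/-- Long-range Ising Hamiltonian with free boundary conditions on {0,...,N-1}:
`H(σ) = -∑_{i<j} J(|i-j|) σᵢ σⱼ - h ∑ᵢ σᵢ`. -/
noncomputable def H (N : ℕ) (J : ℕ → ℝ) (h : ℝ) (σ : Fin N → ℝ) : ℝ :=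
  -(∑ i : Fin N, ∑ j : Fin N,
      if (i : ℕ) < (j : ℕ) then J (Nat.dist (i : ℕ) (j : ℕ)) * σ i * σ j else 0)
    - h * ∑ i : Fin N, σ i

/-- A spin configuration takes values in {-1, +1}. -/
def IsConfig {N : ℕ} (σ : Fin N → ℝ) : Prop := ∀ i, σ i = 1 ∨ σ i = -1

/-- The configuration `L^(k)`: +1 on the first k sites, -1 elsewhere. -/
def Lconf (N k : ℕ) : Fin N → ℝ := fun i => if (i : ℕ) < k then 1 else -1

/-- The configuration `R^(k)`: +1 on the last k sites, -1 elsewhere. -/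
def Rconf (N k : ℕ) : Fin N → ℝ := fun i => if N - k ≤ (i : ℕ) then 1 else -1

/-- The thresholds `h_k^(N) = ∑_{n=1}^{N-k-1} J(n) - ∑_{n=1}^{k} J(n)`. -/
noncomputable def hthr (N : ℕ) (J : ℕ → ℝ) (k : ℕ) : ℝ :=
  (∑ n ∈ Finset.Icc 1 (N - k - 1), J n) - ∑ n ∈ Finset.Icc 1 k, J n

/- ====================  auxiliary material  ==================== -/

private noncomputable def Dfun (J : ℕ → ℝ) (k : ℕ) (a b : ℕ) : ℝ :=
  if a = k then (if k < b then (-2) * J (b - k) else 0)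
  else if b = k then (if a < k then 2 * J (k - a) else 0) else 0

private lemma chain_lt (f : ℕ → ℝ) :
    ∀ b a, a < b → (∀ l, a ≤ l → l < b → f l < f (l + 1)) → f a < f b := by
  intro b
  induction b with
  | zero => intro a ha _; exact absurd ha (Nat.not_lt_zero a)
  | succ n ih =>
    intro a ha hs
    rcases Nat.lt_succ_iff_lt_or_eq.mp ha with h' | rfl
    · exact lt_trans (ih a h' fun l hl1 hl2 => hs l hl1 (by omega)) (hs n (by omega) (by omega))
    · exact hs a le_rfl (Nat.lt_succ_self a)

private lemma hthr_succ_lt (N : ℕ) (J : ℕ → ℝ) (hpos : ∀ n, 1 ≤ n → 0 < J n)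
    (j : ℕ) (hj : j + 1 ≤ N - 1) : hthr N J (j + 1) < hthr N J j := by
  have e1 : N - (j + 1) - 1 = N - j - 2 := by omega
  have e2 : N - j - 1 = (N - j - 2) + 1 := by omega
  unfold hthr
  rw [e1, e2, Finset.sum_Icc_succ_top (by omega), Finset.sum_Icc_succ_top (by omega)]
  have h1 := hpos (N - j - 2 + 1) (by omega)
  have h2 := hpos (j + 1) (by omega)
  linarith

private lemma hthr_anti (N : ℕ) (J : ℕ → ℝ) (hpos : ∀ n, 1 ≤ n → 0 < J n)
    {a b : ℕ} (hab : a < b) (hb : b ≤ N - 1) : hthr N J b < hthr N J a := by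
  have := chain_lt (fun n => -hthr N J n) b a hab (fun l hl1 hl2 => by
    have := hthr_succ_lt N J hpos l (by omega)
    simp only [neg_lt_neg_iff]
    exact this)
  simp only [neg_lt_neg_iff] at this
  exact this

private lemma range_filter_lt (N k : ℕ) (hk : k ≤ N) :
    (range N).filter (fun a => a < k) = range k := by
  ext a
  simp only [mem_filter, mem_range]
  omega

private lemma range_filter_gt (N k : ℕ) :
    (range N).filter (fun b => k < b) = Ico (k + 1) N := by
  ext a
  simp only [mem_filter, mem_range, mem_Ico]
  omega

private lemma sum_shift (J : ℕ → ℝ) (N k : ℕ) :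
    ∑ j ∈ Ico (k + 1) N, J (j - k) = ∑ n ∈ Icc 1 (N - 1 - k), J n := by
  rcases le_or_gt N (k + 1) with hN | hN
  · rw [Ico_eq_empty (by omega), show N - 1 - k = 0 by omega]
    simp
  · rw [show Icc 1 (N - 1 - k) = Ico 1 (N - k) by
        rw [show N - k = (N - 1 - k) + 1 by omega, Finset.Ico_add_one_right_eq_Icc],
      Finset.sum_Ico_eq_sum_range, Finset.sum_Ico_eq_sum_range]
    refine Finset.sum_congr (by rw [show N - (k + 1) = N - k - 1 by omega]) ?_
    intro i _
    congr 1
    omega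

private lemma sum_reflect (J : ℕ → ℝ) (k : ℕ) :
    ∑ a ∈ range k, J (k - a) = ∑ n ∈ Icc 1 k, J n := by
  rw [show Icc 1 k = Ico 1 (k + 1) from (Finset.Ico_add_one_right_eq_Icc 1 k).symm,
    Finset.sum_Ico_eq_sum_range]
  rw [show k + 1 - 1 = k from rfl]
  rw [← Finset.sum_range_reflect (fun i => J (1 + i)) k]
  refine Finset.sum_congr rfl ?_
  intro i hi
  rw [Finset.mem_range] at hi
  congr 1
  omega

private lemma Hstep (N : ℕ) (J : ℕ → ℝ) (h : ℝ) (k : ℕ) (hk : k < N) :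
    H N J h (Lconf N (k + 1)) = H N J h (Lconf N k) + 2 * hthr N J k - 2 * h := by
  -- pointwise identity for the interaction terms
  have key : ∀ i j : Fin N,
      (if (i : ℕ) < (j : ℕ) then
          J (Nat.dist (i : ℕ) (j : ℕ)) * Lconf N (k + 1) i * Lconf N (k + 1) j else 0)
        - (if (i : ℕ) < (j : ℕ) then
          J (Nat.dist (i : ℕ) (j : ℕ)) * Lconf N k i * Lconf N k j else 0)
      = Dfun J k (i : ℕ) (j : ℕ) := by
    intro i j
    unfold Dfun
    by_cases hik : (i : ℕ) = k
    · by_cases hjk : k < (j : ℕ)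
      · have hij : (i : ℕ) < (j : ℕ) := by omega
        have hd : Nat.dist (i : ℕ) (j : ℕ) = (j : ℕ) - k := by
          rw [hik]; exact Nat.dist_eq_sub_of_le (le_of_lt hjk)
        have v1 : Lconf N (k + 1) i = 1 := by
          simp only [Lconf]; rw [if_pos (by omega : (i : ℕ) < k + 1)]
        have v2 : Lconf N k i = -1 := by
          simp only [Lconf]; rw [if_neg (by omega : ¬ (i : ℕ) < k)]
        have v3 : Lconf N (k + 1) j = -1 := by
          simp only [Lconf]; rw [if_neg (by omega : ¬ (j : ℕ) < k + 1)]
        have v4 : Lconf N k j = -1 := by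
          simp only [Lconf]; rw [if_neg (by omega : ¬ (j : ℕ) < k)]
        simp only [if_pos hij, if_pos hik, if_pos hjk, v1, v2, v3, v4, hd]
        ring
      · have hij : ¬ (i : ℕ) < (j : ℕ) := by omega
        simp only [if_neg hij, if_pos hik, if_neg hjk]
        ring
    · by_cases hjk2 : (j : ℕ) = k
      · by_cases hi2 : (i : ℕ) < k
        · have hij : (i : ℕ) < (j : ℕ) := by omega
          have hd : Nat.dist (i : ℕ) (j : ℕ) = k - (i : ℕ) := by
            rw [hjk2]; exact Nat.dist_eq_sub_of_le (by omega)
          have v1 : Lconf N (k + 1) i = 1 := by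
            simp only [Lconf]; rw [if_pos (by omega : (i : ℕ) < k + 1)]
          have v2 : Lconf N k i = 1 := by
            simp only [Lconf]; rw [if_pos hi2]
          have v3 : Lconf N (k + 1) j = 1 := by
            simp only [Lconf]; rw [if_pos (by omega : (j : ℕ) < k + 1)]
          have v4 : Lconf N k j = -1 := by
            simp only [Lconf]; rw [if_neg (by omega : ¬ (j : ℕ) < k)]
          simp only [if_pos hij, if_neg hik, if_pos hjk2, if_pos hi2, v1, v2, v3, v4, hd]
          ring
        · have hij : ¬ (i : ℕ) < (j : ℕ) := by omega
          simp only [if_neg hij, if_neg hik, if_pos hjk2, if_neg hi2]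
          ring
      · have ei : Lconf N (k + 1) i = Lconf N k i := by
          simp only [Lconf]
          exact if_congr (by omega) rfl rfl
        have ej : Lconf N (k + 1) j = Lconf N k j := by
          simp only [Lconf]
          exact if_congr (by omega) rfl rfl
        rw [ei, ej, if_neg hik, if_neg hjk2, sub_self]
  -- linear term
  have hB : (∑ i : Fin N, Lconf N (k + 1) i) = (∑ i : Fin N, Lconf N k i) + 2 := by
    have hfun : ∀ i : Fin N,
        Lconf N (k + 1) i = Lconf N k i + (if (i : ℕ) = k then 2 else 0) := by
      intro i
      by_cases hi : (i : ℕ) = k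
      · simp only [Lconf, hi, if_pos rfl]
        rw [if_pos (Nat.lt_succ_self k), if_neg (lt_irrefl k)]
        norm_num
      · simp only [Lconf, if_neg hi, add_zero]
        exact if_congr (by omega) rfl rfl
    rw [Finset.sum_congr rfl fun i _ => hfun i, Finset.sum_add_distrib]
    congr 1
    rw [Fin.sum_univ_eq_sum_range (fun a => if a = k then (2 : ℝ) else 0) N,
      Finset.sum_ite_eq' (range N) k (fun _ => (2 : ℝ))]
    simp [Finset.mem_range.mpr hk]
  -- interaction term
  have hA : (∑ i : Fin N, ∑ j : Fin N,
        if (i : ℕ) < (j : ℕ) then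
          J (Nat.dist (i : ℕ) (j : ℕ)) * Lconf N (k + 1) i * Lconf N (k + 1) j else 0)
      = (∑ i : Fin N, ∑ j : Fin N,
          if (i : ℕ) < (j : ℕ) then
            J (Nat.dist (i : ℕ) (j : ℕ)) * Lconf N k i * Lconf N k j else 0)
        - 2 * hthr N J k := by
    have e1 : (∑ i : Fin N, ∑ j : Fin N,
          if (i : ℕ) < (j : ℕ) then
            J (Nat.dist (i : ℕ) (j : ℕ)) * Lconf N (k + 1) i * Lconf N (k + 1) j else 0)
        - (∑ i : Fin N, ∑ j : Fin N,
            if (i : ℕ) < (j : ℕ) then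
              J (Nat.dist (i : ℕ) (j : ℕ)) * Lconf N k i * Lconf N k j else 0)
        = ∑ i : Fin N, ∑ j : Fin N, Dfun J k (i : ℕ) (j : ℕ) := by
      rw [← Finset.sum_sub_distrib]
      refine Finset.sum_congr rfl fun i _ => ?_
      rw [← Finset.sum_sub_distrib]
      exact Finset.sum_congr rfl fun j _ => key i j
    have einner : ∀ a : ℕ, (∑ j : Fin N, Dfun J k a (j : ℕ))
        = if a = k then (-2) * ∑ n ∈ Icc 1 (N - 1 - k), J n
          else (if a < k then 2 * J (k - a) else 0) := by
      intro a
      by_cases ha : a = k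
      · rw [if_pos ha]
        have : ∀ j : Fin N, Dfun J k a (j : ℕ)
            = if k < (j : ℕ) then (-2) * J ((j : ℕ) - k) else 0 := by
          intro j; unfold Dfun; rw [if_pos ha]
        rw [Finset.sum_congr rfl fun j _ => this j,
          Fin.sum_univ_eq_sum_range (fun b => if k < b then (-2) * J (b - k) else 0) N,
          ← Finset.sum_filter, range_filter_gt N k, ← Finset.mul_sum, sum_shift]
      · rw [if_neg ha]
        have : ∀ j : Fin N, Dfun J k a (j : ℕ)
            = if (j : ℕ) = k then (if a < k then 2 * J (k - a) else 0) else 0 := by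
          intro j; unfold Dfun; rw [if_neg ha]
        rw [Finset.sum_congr rfl fun j _ => this j,
          Fin.sum_univ_eq_sum_range
            (fun b => if b = k then (if a < k then 2 * J (k - a) else 0) else 0) N,
          Finset.sum_ite_eq' (range N) k (fun _ => if a < k then 2 * J (k - a) else 0),
          if_pos (Finset.mem_range.mpr hk)]
    have e2 : (∑ i : Fin N, ∑ j : Fin N, Dfun J k (i : ℕ) (j : ℕ)) = -2 * hthr N J k := by
      rw [Finset.sum_congr rfl (fun (i : Fin N) (_ : i ∈ (univ : Finset (Fin N))) => einner (i : ℕ)),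
        Fin.sum_univ_eq_sum_range
          (fun a => if a = k then (-2) * ∑ n ∈ Icc 1 (N - 1 - k), J n
            else (if a < k then 2 * J (k - a) else 0)) N]
      have split : ∀ a : ℕ,
          (if a = k then (-2) * ∑ n ∈ Icc 1 (N - 1 - k), J n
            else (if a < k then 2 * J (k - a) else 0))
          = (if a = k then (-2) * ∑ n ∈ Icc 1 (N - 1 - k), J n else 0)
            + (if a < k then 2 * J (k - a) else 0) := by
        intro a
        by_cases ha : a = k
        · rw [if_pos ha, if_pos ha, if_neg (by omega : ¬ a < k), add_zero]
        · rw [if_neg ha, if_neg ha, zero_add]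
      rw [Finset.sum_congr rfl fun a _ => split a, Finset.sum_add_distrib,
        Finset.sum_ite_eq' (range N) k
          (fun _ => (-2) * ∑ n ∈ Icc 1 (N - 1 - k), J n),
        if_pos (Finset.mem_range.mpr hk),
        ← Finset.sum_filter, range_filter_lt N k (le_of_lt hk), ← Finset.mul_sum,
        sum_reflect]
      unfold hthr
      rw [show N - k - 1 = N - 1 - k from by omega]
      ring
    linarith [e1, e2]
  simp only [H]
  rw [hA, hB]
  ring

private lemma hthr_half_nonpos (N : ℕ) (hN : 2 ≤ N) (J : ℕ → ℝ)
    (hpos : ∀ n, 1 ≤ n → 0 < J n) : hthr N J (N / 2) ≤ 0 := by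
  unfold hthr
  rw [sub_nonpos]
  refine Finset.sum_le_sum_of_subset_of_nonneg ?_ ?_
  · exact Finset.Icc_subset_Icc_right (by omega)
  · intro n hn _
    exact (hpos n (Finset.mem_Icc.mp hn).1).le

/-- Proposition 3.2, cases 3 and 1: if `h = h_k^(N)` for some `1 ≤ k ≤ ⌊N/2⌋ - 1`, then
`f(k) = f(k+1)` and these are the strict maxima of `f`; if instead `h < h_{⌊N/2⌋-1}^(N)`,
then `f` attains a unique strict global maximum at `⌊N/2⌋`. -/
theorem degenerate_and_low_field_cases (N : ℕ) (hN : 2 ≤ N) (J : ℕ → ℝ)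
    (hpos : ∀ n, 1 ≤ n → 0 < J n) (hdec : ∀ n, 1 ≤ n → J (n + 1) < J n)
    (h : ℝ) (hh0 : 0 < h) (hh1 : h < ∑ n ∈ Finset.Icc 1 (N - 1), J n) :
    (∀ k, 1 ≤ k → k ≤ N / 2 - 1 → h = hthr N J k →
      H N J h (Lconf N k) = H N J h (Lconf N (k + 1)) ∧
      ∀ i, i ≤ N → i ≠ k → i ≠ k + 1 →
        H N J h (Lconf N i) < H N J h (Lconf N k)) ∧
    (h < hthr N J (N / 2 - 1) →
      ∀ i, i ≤ N → i ≠ N / 2 →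
        H N J h (Lconf N i) < H N J h (Lconf N (N / 2))) := by
  constructor
  · intro k hk1 hk2 hkh
    have hN4 : 4 ≤ N := by omega
    have hkN : k ≤ N - 1 := by omega
    have heq : H N J h (Lconf N (k + 1)) = H N J h (Lconf N k) := by
      rw [Hstep N J h k (by omega), hkh]
      ring
    refine ⟨heq.symm, ?_⟩
    intro i hiN hik hik1
    rcases (by omega : i < k ∨ k + 1 < i) with hi | hi
    · refine chain_lt (fun n => H N J h (Lconf N n)) k i hi (fun l hl1 hl2 => ?_)
      rw [Hstep N J h l (by omega)]
      have hlt : hthr N J k < hthr N J l := hthr_anti N J hpos hl2 hkN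
      rw [hkh] at *
      linarith
    · rw [← heq]
      have := chain_lt (fun n => -(H N J h (Lconf N n))) i (k + 1) hi (fun l hl1 hl2 => by
        rw [Hstep N J h l (by omega)]
        have hlt : hthr N J l < hthr N J k :=
          hthr_anti N J hpos (show k < l by omega) (show l ≤ N - 1 by omega)
        rw [hkh] at *
        linarith)
      linarith
  · intro hlow i hiN hiL
    have hL1 : 1 ≤ N / 2 := by omega
    rcases (by omega : i < N / 2 ∨ N / 2 < i) with hi | hi
    · refine chain_lt (fun n => H N J h (Lconf N n)) (N / 2) i hi (fun l hl1 hl2 => ?_)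
      rw [Hstep N J h l (by omega)]
      have hle : hthr N J (N / 2 - 1) ≤ hthr N J l := by
        rcases (by omega : l = N / 2 - 1 ∨ l < N / 2 - 1) with rfl | hlt
        · exact le_rfl
        · exact (hthr_anti N J hpos hlt (by omega)).le
      linarith
    · have hnp : hthr N J (N / 2) ≤ 0 := hthr_half_nonpos N hN J hpos
      have := chain_lt (fun n => -(H N J h (Lconf N n))) i (N / 2) hi (fun l hl1 hl2 => by
        rw [Hstep N J h l (by omega)]
        have hle : hthr N J l ≤ hthr N J (N / 2) := by
          rcases (by omega : l = N / 2 ∨ N / 2 < l) with rfl | hlt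
          · exact le_rfl
          · exact (hthr_anti N J hpos hlt (by omega)).le
        linarith)
      linarith
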